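/- Let F be a nonempty rooted forest. Then the polynomial S_F(x,y) is irreducible in ℤ[x,y] if and only if F is a tree. -/

import Mathlib

open MvPolynomial

/-- A rooted tree: a root node together with a list of branches. -/
inductive RTree : Type
  | node : List RTree → RTree

/-- A rooted forest: a finite (possibly empty) list of rooted trees. -/
abbrev RForest : Type := List RTree

namespace RTree

/-- Number of vertices of a rooted tree. -/
def size : RTree → ℕ
  | .node ts => 1 + (ts.attach.map fun s => size s.1).sum

  decreasing_by
    all_goals
      simp only [RTree.node.sizeOf_spec]
      have := List.sizeOf_lt_of_mem s.2
      omega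

/-- Number of leaves of a rooted tree. -/
def leafCount : RTree → ℕ
  | .node [] => 1
  | .node (t :: ts) => ((t :: ts).attach.map fun s => leafCount s.1).sum

  decreasing_by
    all_goals
      simp only [RTree.node.sizeOf_spec]
      have := List.sizeOf_lt_of_mem s.2
      omega

/-- The bivariate generating polynomial `P_T(x,y)` of leaf-induced subtrees of `T`,
counted by number of vertices (`X 0`) and number of leaves (`X 1`). -/
noncomputable def Ptree : RTree → MvPolynomial (Fin 2) ℤ
  | .node [] => 1 + X 0 * X 1
  | .node (t :: ts) =>
      1 - X 0 + X 0 * ((t :: ts).attach.map fun s => Ptree s.1).prod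

  decreasing_by
    all_goals
      simp only [RTree.node.sizeOf_spec]
      have := List.sizeOf_lt_of_mem s.2
      omega

/-- The polynomial `p_T(x) = 1 - P_T(x,-1)`. -/
noncomputable def pPol (T : RTree) : Polynomial ℤ :=
  1 - MvPolynomial.aeval ![Polynomial.X, -1] (Ptree T)

/-- The bivariate generating polynomial `S_T(x,y)` of subtrees of `T` (empty or connected
containing the root), counted by vertices (`X 0`) and boundary vertices (`X 1`). -/
noncomputable def Stree : RTree → MvPolynomial (Fin 2) ℤ
  | .node ts => X 1 + X 0 * (ts.attach.map fun s => Stree s.1).prod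

  decreasing_by
    all_goals
      simp only [RTree.node.sizeOf_spec]
      have := List.sizeOf_lt_of_mem s.2
      omega

/-- The bivariate generating polynomial `A_T(x,y)` of admissible subtrees of `T`,
counted by vertices (`X 0`) and boundary vertices (`X 1`). -/
noncomputable def Atree : RTree → MvPolynomial (Fin 2) ℤ
  | .node [] => X 1
  | .node (t :: ts) =>
      X 1 + X 0 * ((t :: ts).attach.map fun s => Atree s.1).prod

  decreasing_by
    all_goals
      simp only [RTree.node.sizeOf_spec]
      have := List.sizeOf_lt_of_mem s.2
      omega

/-- The trivariate polynomial `M_T(x,y,z)` (with `x = X 0`, `y = X 1`, `z = X 2`). -/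
noncomputable def Mtree : RTree → MvPolynomial (Fin 3) ℤ
  | .node ts =>
      Polynomial.aeval (X 2) (pPol (.node ts)).divX +
        X 0 * ∑ i : Fin ts.length,
          Mtree (ts.get i) *
            ∏ j ∈ Finset.univ.erase i,
              MvPolynomial.rename Fin.castSucc (Atree (ts.get j))
  decreasing_by
    simp only [RTree.node.sizeOf_spec]
    have h : sizeOf (ts.get i) < sizeOf ts := List.sizeOf_lt_of_mem (by simp)
    omega

/-- Number of vertices in the stem of a rooted tree. -/
def stemCount : RTree → ℕ
  | .node [t] => 1 + stemCount t
  | .node _ => 1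

/-- Isomorphism of rooted trees. -/
def Iso : RTree → RTree → Prop
  | .node ts, .node us =>
      ∃ σ : Fin ts.length ≃ Fin us.length,
        ∀ i : Fin ts.length, Iso (ts.get i) (us.get (σ i))
  decreasing_by
    simp only [RTree.node.sizeOf_spec]
    have h : sizeOf (ts.get i) < sizeOf ts := List.sizeOf_lt_of_mem (by simp)
    omega

end RTree

namespace RForest

open RTree

/-- Number of vertices of a rooted forest. -/
def size (F : RForest) : ℕ := (F.map RTree.size).sum

/-- Number of leaves of a rooted forest. -/
def leafCount (F : RForest) : ℕ := (F.map RTree.leafCount).sum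

/-- The polynomial `P_F` of a rooted forest: product over components. -/
noncomputable def Pforest (F : RForest) : MvPolynomial (Fin 2) ℤ := (F.map Ptree).prod

/-- The polynomial `S_F` of a rooted forest: product over components. -/
noncomputable def Sforest (F : RForest) : MvPolynomial (Fin 2) ℤ := (F.map Stree).prod

/-- Number of vertices in the stem of a rooted forest (`0` unless the forest is a tree). -/
def stemCount : RForest → ℕ
  | [T] => RTree.stemCount T
  | _ => 0

/-- Isomorphism of rooted forests: a matching of the components by isomorphisms. -/
def Iso (F G : RForest) : Prop :=
  ∃ σ : Fin F.length ≃ Fin G.length,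
    ∀ i : Fin F.length, RTree.Iso (F.get i) (G.get (σ i))

end RForest

/-!
Viewed as a polynomial in `x` over `ℤ[y]`, `S_T = y + x · ∏ S_{T_i}` is monic, has constant
term `y`, and is congruent to `x ^ |T|` modulo `y`; so it is Eisenstein at the prime `y` and
therefore irreducible. A product of two or more irreducibles is not irreducible.
-/

namespace Polynomial

variable {R : Type*} [CommRing R]

def monicWeaklyEisensteinAt (P : Ideal R) : Submonoid R[X] where
  carrier := {f | f.Monic ∧ f.IsWeaklyEisensteinAt P}
  mul_mem' hf hg := ⟨hf.1.mul hg.1, hf.2.mul hg.2⟩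
  one_mem' := ⟨monic_one, ⟨fun h => by simp at h⟩⟩

variable {p : R} {g : R[X]}

theorem natDegree_C_add_X_mul [Nontrivial R] (hg : g.Monic) :
    (C p + X * g).natDegree = g.natDegree + 1 := by
  rw [natDegree_C_add, natDegree_X_mul hg.ne_zero]

theorem C_add_X_mul_mem_monicWeaklyEisensteinAt
    (hg : g ∈ monicWeaklyEisensteinAt (Ideal.span {p})) :
    C p + X * g ∈ monicWeaklyEisensteinAt (Ideal.span {p}) := by
  nontriviality R
  obtain ⟨hg, hgp⟩ := hg
  refine ⟨?_, ⟨fun {n} hn => ?_⟩⟩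
  · rw [add_comm]
    refine (monic_X.mul hg).add_of_left (degree_C_le.trans_lt (natDegree_pos_iff_degree_pos.1 ?_))
    rw [natDegree_X_mul hg.ne_zero]
    omega
  · rw [natDegree_C_add_X_mul hg] at hn
    cases n with
    | zero => simp
    | succ m => simpa [coeff_X_mul] using hgp.mem (by omega)

theorem irreducible_C_add_X_mul [IsDomain R] (hp : Prime p)
    (hg : g ∈ monicWeaklyEisensteinAt (Ideal.span {p})) : Irreducible (C p + X * g) := by
  obtain ⟨hf, hfp⟩ := C_add_X_mul_mem_monicWeaklyEisensteinAt hg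
  have hp_notMem_sq : p ∉ Ideal.span {p} ^ 2 := by
    rw [Ideal.span_singleton_pow, Ideal.mem_span_singleton]
    intro h
    have := (pow_dvd_pow_iff hp.ne_zero hp.not_isUnit).1 (h.trans (pow_one p).symm.dvd)
    omega
  refine IsEisensteinAt.irreducible ?_ ((Ideal.span_singleton_prime hp.ne_zero).2 hp)
    hf.isPrimitive (by rw [natDegree_C_add_X_mul hg.1]; omega)
  refine hf.isEisensteinAt_of_mem_of_notMem ?_ hfp.mem (by simpa using hp_notMem_sq)
  rw [Ne, Ideal.span_singleton_eq_top]
  exact hp.not_isUnit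

end Polynomial

theorem irreducible_list_prod_iff {M : Type*} [CommMonoid M] {l : List M}
    (hl : ∀ a ∈ l, Irreducible a) : Irreducible l.prod ↔ l.length = 1 := by
  match l with
  | [] => simp [not_irreducible_one]
  | [a] => simpa using hl a (by simp)
  | a :: b :: l =>
    refine iff_of_false (fun h => ?_) (by simp)
    rcases h.isUnit_or_isUnit List.prod_cons with ha | hbl
    · exact (hl a (by simp)).not_isUnit ha
    · rw [List.prod_cons] at hbl
      exact (hl b (by simp)).not_isUnit (isUnit_of_mul_isUnit_left hbl)

namespace RTree

theorem finSuccEquiv_Stree_node (ts : List RTree) :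
    finSuccEquiv ℤ 1 (Stree (.node ts)) =
      Polynomial.C (X 0) + Polynomial.X * (ts.map fun t => finSuccEquiv ℤ 1 (Stree t)).prod := by
  rw [Stree, List.attach_map_val, map_add, map_mul, map_list_prod, List.map_map,
    finSuccEquiv_X_zero, ← Fin.succ_zero_eq_one, finSuccEquiv_X_succ]
  rfl

theorem finSuccEquiv_Stree_mem_monicWeaklyEisensteinAt : ∀ T : RTree,
    finSuccEquiv ℤ 1 (Stree T) ∈ Polynomial.monicWeaklyEisensteinAt (Ideal.span {X 0})
  | .node ts => by
    rw [finSuccEquiv_Stree_node]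
    exact Polynomial.C_add_X_mul_mem_monicWeaklyEisensteinAt <| Submonoid.list_prod_mem _ <|
      List.forall_mem_map.2 fun t ht => finSuccEquiv_Stree_mem_monicWeaklyEisensteinAt t
  decreasing_by
    simp only [RTree.node.sizeOf_spec]
    have := List.sizeOf_lt_of_mem ht
    omega

theorem irreducible_Stree (T : RTree) : Irreducible (Stree T) := by
  obtain ⟨ts⟩ := T
  rw [← MulEquiv.irreducible_iff (finSuccEquiv ℤ 1), finSuccEquiv_Stree_node]
  exact Polynomial.irreducible_C_add_X_mul X_prime <| Submonoid.list_prod_mem _ <|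
    List.forall_mem_map.2 fun t _ => finSuccEquiv_Stree_mem_monicWeaklyEisensteinAt t

end RTree

theorem stmt10_general (F : RForest) :
    Irreducible (RForest.Sforest F) ↔ F.length = 1 := by
  rw [RForest.Sforest, irreducible_list_prod_iff, List.length_map]
  exact List.forall_mem_map.2 fun T _ => RTree.irreducible_Stree T

theorem stmt10 (F : RForest) (hF : F ≠ []) :
    Irreducible (RForest.Sforest F) ↔ F.length = 1 :=
  stmt10_general F
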